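/- The Bateman polynomials satisfy the multiplication (binomial) formula $B_n^{\alpha,\beta}(zw) = \sum_{k=0}^{n}\binom{n}{k} w^k (1-w)^{n-k} B_k^{\alpha,\beta}(z)$ for all complex $z,w$ and every nonnegative integer $n$. -/

import Mathlib

open Complex MeasureTheory intervalIntegral Finset

noncomputable def poch (a : ℂ) (k : ℕ) : ℂ := ∏ i ∈ Finset.range k, (a + i)

noncomputable def F01 (c z : ℂ) : ℂ :=
  ∑' k : ℕ, 1 / (poch c k * (Nat.factorial k : ℂ)) * z ^ k

noncomputable def F02 (b c z : ℂ) : ℂ :=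
  ∑' k : ℕ, 1 / (poch b k * poch c k * (Nat.factorial k : ℂ)) * z ^ k

noncomputable def F12 (a b c z : ℂ) : ℂ :=
  ∑' k : ℕ, poch a k / (poch b k * poch c k * (Nat.factorial k : ℂ)) * z ^ k

noncomputable def F22 (a b c d z : ℂ) : ℂ :=
  ∑' k : ℕ, poch a k * poch b k / (poch c k * poch d k * (Nat.factorial k : ℂ)) * z ^ k

noncomputable def F32 (a b c d e z : ℂ) : ℂ :=
  ∑' k : ℕ, poch a k * poch b k * poch c k / (poch d k * poch e k * (Nat.factorial k : ℂ)) * z ^ k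

noncomputable def F23 (a b c d e z : ℂ) : ℂ :=
  ∑' k : ℕ, poch a k * poch b k / (poch c k * poch d k * poch e k * (Nat.factorial k : ℂ)) * z ^ k

noncomputable def Bate (n : ℕ) (α β z : ℂ) : ℂ :=
  ∑ k ∈ Finset.range (n+1),
    (-1 : ℂ) ^ k * (Nat.factorial n : ℂ) /
      ((Nat.factorial k : ℂ) * (Nat.factorial (n - k) : ℂ) * poch (α+1) k * poch (β+1) k) * z ^ k

lemma poch_ne_zero (a : ℂ) (h : ∀ m : ℕ, a ≠ -m) (k : ℕ) : poch a k ≠ 0 := by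
  rw [poch, Finset.prod_ne_zero_iff]
  intro i _
  intro h0
  exact h i (by linear_combination h0)

lemma binom_key (n j : ℕ) (hj : j ≤ n) (w : ℂ) :
    ∑ k ∈ Finset.Icc j n,
        (n.choose k : ℂ) * w ^ k * (1 - w) ^ (n - k) * (k.choose j : ℂ)
      = (n.choose j : ℂ) * w ^ j := by
  have h1 : ∀ k ∈ Finset.Icc j n,
      (n.choose k : ℂ) * w ^ k * (1 - w) ^ (n - k) * (k.choose j : ℂ)
        = (n.choose j : ℂ) * (((n - j).choose (k - j) : ℂ) * w ^ k * (1 - w) ^ (n - k)) := by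
    intro k hk
    rw [Finset.mem_Icc] at hk
    have := Nat.choose_mul (n := n) hk.1
    have hc : (n.choose k : ℂ) * (k.choose j : ℂ) = (n.choose j : ℂ) * ((n - j).choose (k - j) : ℂ) := by
      exact_mod_cast congrArg (Nat.cast : ℕ → ℂ) this
    linear_combination w ^ k * (1 - w) ^ (n - k) * hc
  rw [Finset.sum_congr rfl h1, ← Finset.mul_sum]
  congr 1
  have h2 : Finset.Icc j n = Finset.Ico j (n + 1) := by
    rw [Finset.Ico_add_one_right_eq_Icc]
  rw [h2, Finset.sum_Ico_eq_sum_range]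
  have h3 : n + 1 - j = (n - j) + 1 := by omega
  rw [h3]
  have h4 : ∀ m ∈ Finset.range ((n - j) + 1),
      ((n - j).choose (j + m - j) : ℂ) * w ^ (j + m) * (1 - w) ^ (n - (j + m))
        = w ^ j * (w ^ m * (1 - w) ^ ((n - j) - m) * ((n - j).choose m : ℂ)) := by
    intro m hm
    rw [Finset.mem_range] at hm
    have e1 : j + m - j = m := by omega
    have e2 : n - (j + m) = (n - j) - m := by omega
    rw [e1, e2, pow_add]
    ring
  rw [Finset.sum_congr rfl h4, ← Finset.mul_sum, ← add_pow]
  have : w + (1 - w) = 1 := by ring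
  rw [this, one_pow, mul_one]

theorem bateman_multiplication (alpha beta : ℂ) (n : ℕ)
    (ha : ∀ m : ℕ, alpha + 1 ≠ -m) (hb : ∀ m : ℕ, beta + 1 ≠ -m) :
    ∀ z w : ℂ,
      Bate n alpha beta (z * w) =
        ∑ k ∈ Finset.range (n + 1),
          (Nat.choose n k : ℂ) * w ^ k * (1 - w) ^ (n - k) * Bate k alpha beta z := by
  intro z w
  unfold Bate
  simp only [Finset.mul_sum]
  rw [Finset.sum_comm' (t' := Finset.range (n + 1)) (s' := fun j => Finset.Icc j n)
    (by
      intro k j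
      simp only [Finset.mem_range, Finset.mem_Icc]
      omega)]
  apply Finset.sum_congr rfl
  intro j hj
  rw [Finset.mem_range] at hj
  have hj' : j ≤ n := by omega
  have hP : poch (alpha + 1) j * poch (beta + 1) j ≠ 0 :=
    mul_ne_zero (poch_ne_zero _ ha j) (poch_ne_zero _ hb j)
  have hfac : ∀ m : ℕ, (Nat.factorial m : ℂ) ≠ 0 := fun m => by
    exact_mod_cast Nat.factorial_ne_zero m
  have h1 : ∀ k ∈ Finset.Icc j n,
      (n.choose k : ℂ) * w ^ k * (1 - w) ^ (n - k) *
        ((-1 : ℂ) ^ j * (Nat.factorial k : ℂ) /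
          ((Nat.factorial j : ℂ) * (Nat.factorial (k - j) : ℂ) * poch (alpha+1) j * poch (beta+1) j) * z ^ j)
      = ((n.choose k : ℂ) * w ^ k * (1 - w) ^ (n - k) * (k.choose j : ℂ)) *
          ((-1 : ℂ) ^ j * z ^ j / (poch (alpha+1) j * poch (beta+1) j)) := by
    intro k hk
    rw [Finset.mem_Icc] at hk
    rw [Nat.cast_choose ℂ hk.1]
    have h2 := poch_ne_zero _ ha j
    have h3 := poch_ne_zero _ hb j
    field_simp
  rw [Finset.sum_congr rfl h1, ← Finset.sum_mul, binom_key n j hj' w,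
    Nat.cast_choose ℂ hj']
  have h2 := poch_ne_zero _ ha j
  have h3 := poch_ne_zero _ hb j
  field_simp
  ring
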